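/- Let C = C(ℓ) be a sufficiently large constant and let G be an n-vertex clean graph with average degree d ≥ C·n^{1/2}. Then the total weight of copies of P_{ℓ+1}□K₂ in G is Ω_ℓ(n·d^{ℓ+1}), where the weight of a copy with vertices x_i, y_i (0 ≤ i ≤ ℓ; x_iy_i ∈ E, x_{i−1}x_i, y_{i−1}y_i ∈ E) is defined as 1/∏_{i=1}^{ℓ} max(d(x_{i−1}, y_i), d²/n). -/

import Mathlib

open SimpleGraph

/-- Number of common neighbours of `u` and `v` in `G`. -/
noncomputable def codeg {V : Type*} (G : SimpleGraph V) (u v : V) : ℕ :=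
  (G.neighborSet u ∩ G.neighborSet v).ncard

/-- An `n`-vertex graph `G` of average degree `d` is clean if for every edge `uv`, the
vertex `u` has at least `d/16` neighbours `w` with `d(v,w) ≥ d²/(128n)`. -/
def Clean {n : ℕ} (G : SimpleGraph (Fin n)) : Prop :=
  ∀ u v, G.Adj u v →
    (2 * (G.edgeSet.ncard : ℝ) / n) / 16 ≤
      (({w | G.Adj u w ∧
          (2 * (G.edgeSet.ncard : ℝ) / n) ^ 2 / (128 * n) ≤ (codeg G v w : ℝ)}).ncard : ℝ)

/-- `x₀,…,x_m, y₀,…,y_m` (all distinct) form a copy of `P_{m+1} □ K₂` in `G`: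
`x_iy_i ∈ E` for all `i` and `x_{i-1}x_i, y_{i-1}y_i ∈ E` for `1 ≤ i ≤ m`. -/
def LadderCopy {V : Type*} {m : ℕ} (G : SimpleGraph V) (x y : Fin m → V) : Prop :=
  Function.Injective x ∧ Function.Injective y ∧ (∀ i j, x i ≠ y j) ∧
  (∀ i, G.Adj (x i) (y i)) ∧
  ∀ i : ℕ, (h : i + 1 < m) →
    G.Adj (x ⟨i, by omega⟩) (x ⟨i + 1, h⟩) ∧ G.Adj (y ⟨i, by omega⟩) (y ⟨i + 1, h⟩)

namespace TWL

open Finset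

variable {n : ℕ} (G : SimpleGraph (Fin n))

/-- average degree -/
noncomputable def dd : ℝ := 2 * (G.edgeSet.ncard : ℝ) / n

noncomputable def wt (m : ℕ) (q : (Fin (m+1) → Fin n) × (Fin (m+1) → Fin n)) : ℝ :=
  (∏ i : Fin m, max (codeg G (q.1 i.castSucc) (q.2 i.succ) : ℝ) ((dd G)^2 / n))⁻¹

lemma wt_nonneg (m : ℕ) (q : (Fin (m+1) → Fin n) × (Fin (m+1) → Fin n)) : 0 ≤ wt G m q := by
  apply inv_nonneg.2
  exact Finset.prod_nonneg fun i _ => le_max_of_le_left (Nat.cast_nonneg _)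

noncomputable def LSet (m : ℕ) : Finset ((Fin (m+1) → Fin n) × (Fin (m+1) → Fin n)) :=
  ({q | LadderCopy G q.1 q.2} : Set _).toFinite.toFinset

lemma mem_LSet {m : ℕ} {q : (Fin (m+1) → Fin n) × (Fin (m+1) → Fin n)} :
    q ∈ LSet G m ↔ LadderCopy G q.1 q.2 := Set.Finite.mem_toFinset _

/-- common neighbours as a Finset -/
noncomputable def cnbrs (u v : Fin n) : Finset (Fin n) :=
  (G.neighborSet u ∩ G.neighborSet v).toFinite.toFinset

lemma mem_cnbrs {u v w : Fin n} : w ∈ cnbrs G u v ↔ G.Adj u w ∧ G.Adj v w := by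
  simp [cnbrs, Set.Finite.mem_toFinset]

lemma codeg_eq_card (u v : Fin n) : codeg G u v = (cnbrs G u v).card :=
  Set.ncard_eq_toFinset_card _ _

lemma snoc_injective {α : Type*} {m : ℕ} {f : Fin m → α} {a : α}
    (hf : Function.Injective f) (ha : ∀ i, f i ≠ a) :
    Function.Injective (Fin.snoc f a) := by
  intro i j h
  induction i using Fin.lastCases with
  | last =>
    induction j using Fin.lastCases with
    | last => rfl
    | cast j =>
      rw [Fin.snoc_last, Fin.snoc_castSucc] at h
      exact absurd h.symm (ha j)
  | cast i =>
    induction j using Fin.lastCases with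
    | last =>
      rw [Fin.snoc_last, Fin.snoc_castSucc] at h
      exact absurd h (ha i)
    | cast j =>
      rw [Fin.snoc_castSucc, Fin.snoc_castSucc] at h
      exact congrArg Fin.castSucc (hf h)

lemma snoc_eq_snoc {α : Type*} {m : ℕ} {f g : Fin m → α} {a b : α}
    (h : (Fin.snoc f a : Fin (m+1) → α) = Fin.snoc g b) : f = g ∧ a = b := by
  constructor
  · funext i
    have := congrFun h i.castSucc
    simpa using this
  · have := congrFun h (Fin.last m)
    simpa using this

lemma ladder_snoc {m : ℕ} {x y : Fin (m+1) → Fin n} (h : LadderCopy G x y)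
    {a b : Fin n} (hxa : ∀ i, x i ≠ a) (hya : ∀ i, y i ≠ a)
    (hxb : ∀ i, x i ≠ b) (hyb : ∀ i, y i ≠ b)
    (hab : G.Adj a b) (hlx : G.Adj (x (Fin.last m)) a) (hly : G.Adj (y (Fin.last m)) b) :
    LadderCopy G (Fin.snoc x a) (Fin.snoc y b) := by
  obtain ⟨hx, hy, hxy, hadj, hpath⟩ := h
  refine ⟨snoc_injective hx hxa, snoc_injective hy hyb, ?_, ?_, ?_⟩
  · intro i j
    induction i using Fin.lastCases with
    | last =>
      induction j using Fin.lastCases with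
      | last => simpa using hab.ne
      | cast j => simpa using (hya j).symm
    | cast i =>
      induction j using Fin.lastCases with
      | last => simpa using hxb i
      | cast j => simpa using hxy i j
  · intro i
    induction i using Fin.lastCases with
    | last => simpa using hab
    | cast i => simpa using hadj i
  · intro i hi
    by_cases him : i + 1 < m + 1
    · have h0 : ((⟨i, by omega⟩ : Fin (m+2))) = Fin.castSucc ⟨i, by omega⟩ := rfl
      have h1 : ((⟨i+1, hi⟩ : Fin (m+2))) = Fin.castSucc ⟨i+1, him⟩ := rfl
      rw [h0, h1, Fin.snoc_castSucc, Fin.snoc_castSucc, Fin.snoc_castSucc, Fin.snoc_castSucc]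
      exact hpath i him
    · have him' : i = m := by omega
      have h0 : ((⟨i, by omega⟩ : Fin (m+2))) = Fin.castSucc (Fin.last m) := by
        apply Fin.ext; simp [him']
      have h1 : ((⟨i+1, hi⟩ : Fin (m+2))) = Fin.last (m+1) := by
        apply Fin.ext; simp [him']
      rw [h0, h1, Fin.snoc_castSucc, Fin.snoc_castSucc, Fin.snoc_last, Fin.snoc_last]
      exact ⟨hlx, hly⟩

lemma wt_snoc {m : ℕ} (x y : Fin (m+1) → Fin n) (a b : Fin n) :
    wt G (m+1) (Fin.snoc x a, Fin.snoc y b)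
      = wt G m (x, y) * (max (codeg G (x (Fin.last m)) b : ℝ) ((dd G)^2/n))⁻¹ := by
  unfold wt
  rw [Fin.prod_univ_castSucc, mul_inv]
  congr 1
  · congr 1
    apply Finset.prod_congr rfl
    intro i _
    rw [Fin.succ_castSucc]
    simp [-Fin.castSucc_succ]
  · rw [Fin.succ_last]
    simp

noncomputable def used {m : ℕ} (q : (Fin (m+1) → Fin n) × (Fin (m+1) → Fin n)) :
    Finset (Fin n) :=
  (Finset.univ.image q.1) ∪ (Finset.univ.image q.2)

lemma card_used {m : ℕ} (q : (Fin (m+1) → Fin n) × (Fin (m+1) → Fin n)) :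
    (used q).card ≤ 2 * (m+1) := by
  refine le_trans (Finset.card_union_le _ _) ?_
  have h1 := Finset.card_image_le (s := (Finset.univ : Finset (Fin (m+1)))) (f := q.1)
  have h2 := Finset.card_image_le (s := (Finset.univ : Finset (Fin (m+1)))) (f := q.2)
  simp only [Finset.card_univ, Fintype.card_fin] at h1 h2
  omega

lemma not_mem_used {m : ℕ} {q : (Fin (m+1) → Fin n) × (Fin (m+1) → Fin n)} {a : Fin n}
    (ha : a ∉ used q) : (∀ i, q.1 i ≠ a) ∧ (∀ i, q.2 i ≠ a) := by
  simp only [used, Finset.mem_union, Finset.mem_image, Finset.mem_univ, true_and,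
    not_or, not_exists] at ha
  exact ⟨fun i => ha.1 i, fun i => ha.2 i⟩

noncomputable def Bset (m : ℕ) (q : (Fin (m+1) → Fin n) × (Fin (m+1) → Fin n)) :
    Finset (Fin n) :=
  ({w | G.Adj (q.2 (Fin.last m)) w ∧
      (dd G)^2/(128*(n:ℝ)) ≤ (codeg G (q.1 (Fin.last m)) w : ℝ)} : Set _).toFinite.toFinset
    \ used q

lemma mem_Bset {m : ℕ} {q : (Fin (m+1) → Fin n) × (Fin (m+1) → Fin n)} {b : Fin n}
    (hb : b ∈ Bset G m q) :
    G.Adj (q.2 (Fin.last m)) b ∧ (dd G)^2/(128*(n:ℝ)) ≤ (codeg G (q.1 (Fin.last m)) b : ℝ)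
      ∧ b ∉ used q := by
  rw [Bset, Finset.mem_sdiff, Set.Finite.mem_toFinset] at hb
  exact ⟨hb.1.1, hb.1.2, hb.2⟩

noncomputable def Aset (m : ℕ) (q : (Fin (m+1) → Fin n) × (Fin (m+1) → Fin n)) (b : Fin n) :
    Finset (Fin n) :=
  (cnbrs G (q.1 (Fin.last m)) b) \ used q

lemma mem_Aset {m : ℕ} {q : (Fin (m+1) → Fin n) × (Fin (m+1) → Fin n)} {b a : Fin n}
    (ha : a ∈ Aset G m q b) :
    G.Adj (q.1 (Fin.last m)) a ∧ G.Adj b a ∧ a ∉ used q := by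
  rw [Aset, Finset.mem_sdiff, mem_cnbrs] at ha
  exact ⟨ha.1.1, ha.1.2, ha.2⟩

/-- index set for extensions -/
noncomputable def T (m : ℕ) :
    Finset (Σ _ : (Fin (m+1) → Fin n) × (Fin (m+1) → Fin n), Σ _ : Fin n, Fin n) :=
  (LSet G m).sigma (fun q => (Bset G m q).sigma (fun b => Aset G m q b))

/-- extension map -/
noncomputable def Phi (m : ℕ)
    (p : Σ _ : (Fin (m+1) → Fin n) × (Fin (m+1) → Fin n), Σ _ : Fin n, Fin n) :
    (Fin (m+2) → Fin n) × (Fin (m+2) → Fin n) :=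
  (Fin.snoc p.1.1 p.2.2, Fin.snoc p.1.2 p.2.1)

lemma Phi_maps_to {m : ℕ} {p : Σ _ : (Fin (m+1) → Fin n) × (Fin (m+1) → Fin n),
    Σ _ : Fin n, Fin n} (hp : p ∈ T G m) : Phi m p ∈ LSet G (m+1) := by
  obtain ⟨q, b, a⟩ := p
  rw [T, Finset.mem_sigma, Finset.mem_sigma] at hp
  obtain ⟨hq, hb, ha⟩ := hp
  obtain ⟨hby, hbcod, hbused⟩ := mem_Bset G hb
  obtain ⟨hax, hba, haused⟩ := mem_Aset G ha
  rw [mem_LSet]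
  exact ladder_snoc G ((mem_LSet G).1 hq) (not_mem_used haused).1 (not_mem_used haused).2
    (not_mem_used hbused).1 (not_mem_used hbused).2 hba.symm hax hby

lemma Phi_injective {m : ℕ} : Function.Injective (Phi (n := n) m) := by
  rintro ⟨q, b, a⟩ ⟨q', b', a'⟩ h
  rw [Phi, Phi, Prod.mk.injEq] at h
  obtain ⟨h1, h2⟩ := snoc_eq_snoc h.1
  obtain ⟨h3, h4⟩ := snoc_eq_snoc h.2
  have hq : q = q' := Prod.ext h1 h3
  subst hq; subst h2; subst h4
  rfl

lemma sum_Aset {m : ℕ} (q : (Fin (m+1) → Fin n) × (Fin (m+1) → Fin n)) (b : Fin n) :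
    ∑ a ∈ Aset G m q b, wt G (m+1) (Fin.snoc q.1 a, Fin.snoc q.2 b)
      = ((Aset G m q b).card : ℝ) *
        (wt G m q * (max (codeg G (q.1 (Fin.last m)) b : ℝ) ((dd G)^2/n))⁻¹) := by
  have h : ∀ a ∈ Aset G m q b,
      wt G (m+1) (Fin.snoc q.1 a, Fin.snoc q.2 b)
        = wt G m q * (max (codeg G (q.1 (Fin.last m)) b : ℝ) ((dd G)^2/n))⁻¹ := by
    intro a _
    rw [wt_snoc]
  rw [Finset.sum_congr rfl h, Finset.sum_const, nsmul_eq_mul]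

lemma per_b_bound {m : ℕ} (hn : 0 < n)
    {q : (Fin (m+1) → Fin n) × (Fin (m+1) → Fin n)} {b : Fin n}
    (hdm : 1024 * ((m:ℝ)+1) ≤ (dd G)^2/(128*(n:ℝ)))
    (hc : (dd G)^2/(128*(n:ℝ)) ≤ (codeg G (q.1 (Fin.last m)) b : ℝ)) :
    (1:ℝ)/256 ≤ ((Aset G m q b).card : ℝ) *
        (max (codeg G (q.1 (Fin.last m)) b : ℝ) ((dd G)^2/n))⁻¹ := by
  set c : ℝ := (codeg G (q.1 (Fin.last m)) b : ℝ) with hcdef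
  set D : ℝ := (dd G)^2/n with hDdef
  have hm1 : (0:ℝ) < (m:ℝ) + 1 := by positivity
  have hcpos : 1024 * ((m:ℝ)+1) ≤ c := le_trans hdm hc
  have hc0 : 0 < c := by nlinarith
  -- card bound
  have hcard : c - 2*((m:ℝ)+1) ≤ ((Aset G m q b).card : ℝ) := by
    have h1 : (cnbrs G (q.1 (Fin.last m)) b).card
        ≤ (Aset G m q b).card + (used q).card := Finset.card_le_card_sdiff_add_card
    have h2 : (used q).card ≤ 2 * (m+1) := card_used q
    have h3 : c = ((cnbrs G (q.1 (Fin.last m)) b).card : ℝ) := by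
      rw [hcdef, codeg_eq_card]
    rw [h3]
    have h4 : (cnbrs G (q.1 (Fin.last m)) b).card ≤ (Aset G m q b).card + 2*(m+1) := by omega
    have := Nat.cast_le (α := ℝ) |>.2 h4
    push_cast at this ⊢
    linarith
  have hhalf : c/2 ≤ ((Aset G m q b).card : ℝ) := by linarith
  rcases le_total D c with hDc | hcD
  · rw [max_eq_left hDc]
    have : (1:ℝ)/256 ≤ (c/2) * c⁻¹ := by
      rw [div_mul_eq_mul_div, mul_inv_cancel₀ (ne_of_gt hc0)]
      norm_num
    refine le_trans this ?_
    apply mul_le_mul_of_nonneg_right hhalf (by positivity)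
  · rw [max_eq_right hcD]
    have hD0 : 0 < D := lt_of_lt_of_le hc0 hcD
    have hDc2 : D/256 ≤ c/2 := by
      have : D/128 ≤ c := by
        rw [hDdef]
        have : (dd G)^2/n/128 = (dd G)^2/(128*(n:ℝ)) := by
          rw [div_div]; ring_nf
        rw [this]
        exact hc
      linarith
    have : (1:ℝ)/256 ≤ (c/2) * D⁻¹ := by
      have h5 : (D/256) * D⁻¹ ≤ (c/2) * D⁻¹ :=
        mul_le_mul_of_nonneg_right hDc2 (by positivity)
      have h6 : (D/256) * D⁻¹ = 1/256 := by
        field_simp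
      linarith
    refine le_trans this ?_
    apply mul_le_mul_of_nonneg_right hhalf (by positivity)

lemma card_Bset_lower {m : ℕ} (hclean : Clean G)
    {q : (Fin (m+1) → Fin n) × (Fin (m+1) → Fin n)}
    (hadj : G.Adj (q.1 (Fin.last m)) (q.2 (Fin.last m))) :
    dd G / 16 - 2*((m:ℝ)+1) ≤ ((Bset G m q).card : ℝ) := by
  have hfin : ({w | G.Adj (q.2 (Fin.last m)) w ∧
      (dd G)^2/(128*(n:ℝ)) ≤ (codeg G (q.1 (Fin.last m)) w : ℝ)} : Set (Fin n)).Finite :=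
    Set.toFinite _
  have hcl := hclean (q.2 (Fin.last m)) (q.1 (Fin.last m)) hadj.symm
  have hn2 : ({w | G.Adj (q.2 (Fin.last m)) w ∧
      (dd G)^2/(128*(n:ℝ)) ≤ (codeg G (q.1 (Fin.last m)) w : ℝ)} : Set (Fin n)).ncard
        = hfin.toFinset.card := Set.ncard_eq_toFinset_card _ hfin
  have key : dd G / 16 ≤ (hfin.toFinset.card : ℝ) := by
    rw [← hn2]; exact hcl
  have h1 : hfin.toFinset.card ≤ (Bset G m q).card + (used q).card :=
    Finset.card_le_card_sdiff_add_card
  have h2 : (used q).card ≤ 2 * (m+1) := card_used q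
  have h3 : hfin.toFinset.card ≤ (Bset G m q).card + 2*(m+1) := by omega
  have h4 := Nat.cast_le (α := ℝ) |>.2 h3
  push_cast at h4
  linarith

lemma step (m : ℕ) (hclean : Clean G) (hn : 0 < n)
    (hdm : 1024 * ((m:ℝ)+1) ≤ (dd G)^2/(128*(n:ℝ)))
    (hdm2 : 64 * ((m:ℝ)+1) ≤ dd G) :
    dd G / 8192 * ∑ q ∈ LSet G m, wt G m q ≤ ∑ q ∈ LSet G (m+1), wt G (m+1) q := by
  have hsub : (T G m).image (Phi m) ⊆ LSet G (m+1) := by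
    intro q' hq'
    rw [Finset.mem_image] at hq'
    obtain ⟨p, hp, rfl⟩ := hq'
    exact Phi_maps_to G hp
  have h1 : ∑ q' ∈ (T G m).image (Phi m), wt G (m+1) q'
      ≤ ∑ q' ∈ LSet G (m+1), wt G (m+1) q' :=
    Finset.sum_le_sum_of_subset_of_nonneg hsub (fun q' _ _ => wt_nonneg G _ q')
  have h2 : ∑ q' ∈ (T G m).image (Phi m), wt G (m+1) q'
      = ∑ p ∈ T G m, wt G (m+1) (Phi m p) :=
    Finset.sum_image (fun p _ p' _ h => Phi_injective h)
  have h3 : ∑ p ∈ T G m, wt G (m+1) (Phi m p)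
      = ∑ q ∈ LSet G m, ∑ b ∈ Bset G m q, ∑ a ∈ Aset G m q b,
          wt G (m+1) (Fin.snoc q.1 a, Fin.snoc q.2 b) := by
    rw [T, Finset.sum_sigma]
    refine Finset.sum_congr rfl fun q _ => ?_
    rw [Finset.sum_sigma]
    rfl
  have h4 : ∀ q ∈ LSet G m,
      dd G / 8192 * wt G m q ≤ ∑ b ∈ Bset G m q, ∑ a ∈ Aset G m q b,
        wt G (m+1) (Fin.snoc q.1 a, Fin.snoc q.2 b) := by
    intro q hq
    have hq' := (mem_LSet G).1 hq
    have hwq : 0 ≤ wt G m q := wt_nonneg G m q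
    have hper : ∀ b ∈ Bset G m q,
        (1:ℝ)/256 * wt G m q ≤ ∑ a ∈ Aset G m q b,
          wt G (m+1) (Fin.snoc q.1 a, Fin.snoc q.2 b) := by
      intro b hb
      rw [sum_Aset]
      obtain ⟨hby, hbc, hbu⟩ := mem_Bset G hb
      have hkey := per_b_bound G hn (q := q) (b := b) hdm hbc
      calc (1:ℝ)/256 * wt G m q
          ≤ (((Aset G m q b).card : ℝ) *
            (max (codeg G (q.1 (Fin.last m)) b : ℝ) ((dd G)^2/n))⁻¹) * wt G m q :=
            mul_le_mul_of_nonneg_right hkey hwq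
        _ = ((Aset G m q b).card : ℝ) *
            (wt G m q * (max (codeg G (q.1 (Fin.last m)) b : ℝ) ((dd G)^2/n))⁻¹) := by
            ring
    have hsum : ((Bset G m q).card : ℝ) * ((1:ℝ)/256 * wt G m q)
        ≤ ∑ b ∈ Bset G m q, ∑ a ∈ Aset G m q b,
          wt G (m+1) (Fin.snoc q.1 a, Fin.snoc q.2 b) := by
      calc ((Bset G m q).card : ℝ) * ((1:ℝ)/256 * wt G m q)
          = ∑ _b ∈ Bset G m q, (1:ℝ)/256 * wt G m q := by
            rw [Finset.sum_const, nsmul_eq_mul]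
        _ ≤ _ := Finset.sum_le_sum hper
    have hB := card_Bset_lower G hclean (hq'.2.2.2.1 (Fin.last m))
    have hB2 : dd G / 32 ≤ ((Bset G m q).card : ℝ) := by linarith
    refine le_trans ?_ hsum
    have : dd G / 8192 * wt G m q = (dd G / 32) * ((1:ℝ)/256 * wt G m q) := by ring
    rw [this]
    apply mul_le_mul_of_nonneg_right hB2 (by positivity)
  calc dd G / 8192 * ∑ q ∈ LSet G m, wt G m q
      = ∑ q ∈ LSet G m, dd G / 8192 * wt G m q := Finset.mul_sum _ _ _
    _ ≤ ∑ q ∈ LSet G m, ∑ b ∈ Bset G m q, ∑ a ∈ Aset G m q b,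
          wt G (m+1) (Fin.snoc q.1 a, Fin.snoc q.2 b) := Finset.sum_le_sum h4
    _ = ∑ p ∈ T G m, wt G (m+1) (Phi m p) := h3.symm
    _ = ∑ q' ∈ (T G m).image (Phi m), wt G (m+1) q' := h2.symm
    _ ≤ ∑ q' ∈ LSet G (m+1), wt G (m+1) q' := h1

lemma card_LSet_zero : (LSet G 0).card = 2 * G.edgeSet.ncard := by
  classical
  have h1 : G.edgeSet.ncard = G.edgeFinset.card := by
    rw [Set.ncard_eq_toFinset_card']
    congr 1
  rw [h1, ← SimpleGraph.dart_card_eq_twice_card_edges, ← Finset.card_univ]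
  refine Finset.card_bij' (fun q hq => (⟨(q.1 0, q.2 0),
      ((mem_LSet G).1 hq).2.2.2.1 0⟩ : G.Dart))
    (fun d _ => ((fun _ => d.toProd.1, fun _ => d.toProd.2)))
    (fun q hq => Finset.mem_univ _) ?_ ?_ ?_
  · intro d _
    rw [mem_LSet]
    have fin1 : ∀ u v : Fin (0+1), u = v := fun u v =>
      Fin.ext (by have := u.isLt; have := v.isLt; omega)
    exact ⟨fun u v _ => fin1 u v, fun u v _ => fin1 u v,
      fun i j => d.adj.ne, fun i => d.adj, fun i hi => absurd hi (by omega)⟩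
  · intro q hq
    have fin1 : ∀ i : Fin (0+1), (0 : Fin (0+1)) = i := fun i =>
      Fin.ext (by have := i.isLt; omega)
    exact Prod.ext (funext fun i => congrArg _ (fin1 i))
      (funext fun i => congrArg _ (fin1 i))
  · intro d _
    exact SimpleGraph.Dart.ext _ _ rfl

lemma base_eq (hn : 0 < n) : ∑ q ∈ LSet G 0, wt G 0 q = (n : ℝ) * dd G := by
  have hwt : ∀ q ∈ LSet G 0, wt G 0 q = 1 := by
    intro q _
    simp [wt]
  rw [Finset.sum_congr rfl hwt, Finset.sum_const, nsmul_eq_mul, mul_one, card_LSet_zero, dd]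
  have hn' : (n:ℝ) ≠ 0 := Nat.cast_ne_zero.2 hn.ne'
  push_cast
  field_simp

lemma main_est (l : ℕ) (hclean : Clean G) (hn : 0 < n)
    (hd1 : 1024 * ((l:ℝ)+1) ≤ (dd G)^2/(128*(n:ℝ)))
    (hd2 : 64 * ((l:ℝ)+1) ≤ dd G) :
    ∀ m, m ≤ l → (n:ℝ) * dd G * (dd G / 8192)^m ≤ ∑ q ∈ LSet G m, wt G m q := by
  intro m
  induction m with
  | zero =>
    intro _
    rw [base_eq G hn]
    simp
  | succ m ih =>
    intro hml
    have hml' : m ≤ l := by omega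
    have hdd0 : 0 ≤ dd G := by
      have : (0:ℝ) ≤ 64 * ((l:ℝ)+1) := by positivity
      linarith
    have hdm : 1024 * ((m:ℝ)+1) ≤ (dd G)^2/(128*(n:ℝ)) := by
      have : ((m:ℝ)+1) ≤ ((l:ℝ)+1) := by
        have : (m:ℝ) ≤ (l:ℝ) := Nat.cast_le.2 hml'
        linarith
      nlinarith
    have hdm2 : 64 * ((m:ℝ)+1) ≤ dd G := by
      have : ((m:ℝ)+1) ≤ ((l:ℝ)+1) := by
        have : (m:ℝ) ≤ (l:ℝ) := Nat.cast_le.2 hml'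
        linarith
      nlinarith
    calc (n:ℝ) * dd G * (dd G / 8192)^(m+1)
        = dd G / 8192 * ((n:ℝ) * dd G * (dd G / 8192)^m) := by ring
      _ ≤ dd G / 8192 * ∑ q ∈ LSet G m, wt G m q := by
          apply mul_le_mul_of_nonneg_left (ih hml') (by positivity)
      _ ≤ ∑ q ∈ LSet G (m+1), wt G (m+1) q := step G m hclean hn hdm hdm2

end TWL

/-- For sufficiently large `C = C(ℓ)`: if `G` is an `n`-vertex clean graph with average
degree `d ≥ C·n^{1/2}`, then the total weight of copies of `P_{ℓ+1}□K₂` in `G` is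
`Ω_ℓ(n·d^{ℓ+1})`, where a copy `x₀…x_ℓ, y₀…y_ℓ` has weight
`1/∏_{i=1}^ℓ max(d(x_{i-1}, y_i), d²/n)`. -/
theorem total_weight_ladders (l : ℕ) (hl : 2 ≤ l) :
    ∃ C c : ℝ, 0 < C ∧ 0 < c ∧
      ∀ (n : ℕ) (G : SimpleGraph (Fin n)), Clean G →
        C * Real.sqrt n ≤ 2 * (G.edgeSet.ncard : ℝ) / n →
        c * n * (2 * (G.edgeSet.ncard : ℝ) / n) ^ (l + 1) ≤
          ∑ᶠ q ∈ {q : (Fin (l + 1) → Fin n) × (Fin (l + 1) → Fin n) |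
              LadderCopy G q.1 q.2},
            (∏ i : Fin l,
              max (codeg G (q.1 i.castSucc) (q.2 i.succ) : ℝ)
                ((2 * (G.edgeSet.ncard : ℝ) / n) ^ 2 / n))⁻¹ := by
  refine ⟨1024*((l:ℝ)+1), ((8192:ℝ)^l)⁻¹, by positivity, by positivity, ?_⟩
  intro n G hclean hd
  rw [finsum_mem_eq_finite_toFinset_sum _ (Set.toFinite _)]
  rcases Nat.eq_zero_or_pos n with hn | hn
  · subst hn
    simp only [Nat.cast_zero, mul_zero, zero_mul]
    apply Finset.sum_nonneg
    intro q hq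
    exact inv_nonneg.2 (Finset.prod_nonneg fun i _ => le_max_of_le_left (Nat.cast_nonneg _))
  · have hn' : (1:ℝ) ≤ (n:ℝ) := by exact_mod_cast hn
    have hs1 : (1:ℝ) ≤ Real.sqrt n := by
      rw [show (1:ℝ) = Real.sqrt 1 from (Real.sqrt_one).symm]
      exact Real.sqrt_le_sqrt hn'
    have hCd : 1024*((l:ℝ)+1) ≤ TWL.dd G := by
      have h0 : (0:ℝ) ≤ 1024*((l:ℝ)+1) := by positivity
      have : 1024*((l:ℝ)+1) ≤ 1024*((l:ℝ)+1) * Real.sqrt n := by nlinarith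
      exact le_trans this hd
    have hl0 : (0:ℝ) ≤ (l:ℝ) := Nat.cast_nonneg l
    have hd2 : 64*((l:ℝ)+1) ≤ TWL.dd G := by linarith
    have hdd0 : (0:ℝ) ≤ TWL.dd G := by linarith
    have hsq : Real.sqrt (n:ℝ) ^ 2 = (n:ℝ) := Real.sq_sqrt (by linarith)
    have hdd2 : (1024*((l:ℝ)+1))^2 * (n:ℝ) ≤ (TWL.dd G)^2 := by
      have hsn : (0:ℝ) ≤ Real.sqrt n := Real.sqrt_nonneg _
      have h0 : (0:ℝ) ≤ 1024*((l:ℝ)+1) := by positivity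
      have hd' : 1024*((l:ℝ)+1) * Real.sqrt n ≤ TWL.dd G := hd
      have hmul := mul_le_mul hd' hd' (by positivity) hdd0
      nlinarith [hmul, hsq]
    have hd1 : 1024*((l:ℝ)+1) ≤ (TWL.dd G)^2/(128*(n:ℝ)) := by
      rw [le_div_iff₀ (by positivity : (0:ℝ) < 128*(n:ℝ))]
      nlinarith
    have main := TWL.main_est G l hclean hn hd1 hd2 l le_rfl
    show ((8192:ℝ)^l)⁻¹ * n * (TWL.dd G)^(l+1) ≤ ∑ q ∈ TWL.LSet G l, TWL.wt G l q
    refine le_trans (le_of_eq ?_) main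
    rw [div_pow, pow_succ]
    field_simp
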